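/- Let α > 0. Then for every locally finite graph G=(V,E), every vertex v ∈ V, every p ∈ [0,1], and every 0 ≤ t < α²/2, the expectation E_p[|h_p(K_v)| e^{t E_v} 1(α E_v ≤ |h_p(K_v)| < ∞)] is finite. -/

import Mathlib

open MeasureTheory Filter Set
open scoped ENNReal

namespace Percolation

variable {V : Type*}

/-- The graph spanned by the open edges of a configuration `ω : Sym2 V → Bool`. -/
def openGraph (G : SimpleGraph V) (ω : Sym2 V → Bool) : SimpleGraph V where
  Adj u w := G.Adj u w ∧ ω s(u, w) = true
  symm := by
    constructor
    intro u w h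
    exact ⟨h.1.symm, by rw [Sym2.eq_swap]; exact h.2⟩
  loopless := ⟨fun u h => G.loopless.irrefl u h.1⟩

/-- The open cluster of the vertex `v` in the configuration `ω`. -/
def cluster (G : SimpleGraph V) (ω : Sym2 V → Bool) (v : V) : Set V :=
  {u | (openGraph G ω).Reachable v u}

/-- The set `E(S)` of edges of `G` with at least one endpoint in `S`. -/
def touchingEdges (G : SimpleGraph V) (S : Set V) : Set (Sym2 V) :=
  {e | e ∈ G.edgeSet ∧ ∃ u ∈ S, u ∈ e}

/-- The set `E(K_v)` of edges of `G` with at least one endpoint in the cluster of `v`. -/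
def clusterEdges (G : SimpleGraph V) (ω : Sym2 V → Bool) (v : V) : Set (Sym2 V) :=
  touchingEdges G (cluster G ω v)

/-- `μ` is the law of Bernoulli-`p` bond percolation on `G`: it is a probability measure on
configurations under which the states of the edges of `G` are independent, each edge being
open with probability `p`.  (This characterizes `μ` on all events depending only on the states
of the edges of `G`.) -/
def IsBernoulli (G : SimpleGraph V) (p : ℝ) (μ : Measure (Sym2 V → Bool)) : Prop :=
  IsProbabilityMeasure μ ∧
    ∀ s : Finset (Sym2 V), ↑s ⊆ G.edgeSet → ∀ f : Sym2 V → Bool,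
      μ {ω | ∀ e ∈ s, ω e = f e} =
        ENNReal.ofReal (p ^ (s.filter fun e => f e = true).card *
          (1 - p) ^ (s.filter fun e => f e = false).card)

/-- The critical probability of `G`. -/
noncomputable def pc (G : SimpleGraph V) : ℝ :=
  sInf {p : ℝ | 0 ≤ p ∧ p ≤ 1 ∧
    ∀ μ : Measure (Sym2 V → Bool), IsBernoulli G p μ →
      μ {ω | ∃ u : V, (cluster G ω u).Infinite} = 1}

/-- `ζ(p) = -limsup (1/n) log P_p(n ≤ E_v < ∞)`, where `μ` is Bernoulli-`p` percolation. -/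
noncomputable def zeta (G : SimpleGraph V) (v : V) (μ : Measure (Sym2 V → Bool)) : ℝ :=
  - Filter.limsup (fun n : ℕ =>
      Real.log (μ {ω | (n : ℕ∞) ≤ (clusterEdges G ω v).encard ∧
        (clusterEdges G ω v).encard < ⊤}).toReal / (n : ℝ)) Filter.atTop

/-- A graph is (vertex-)transitive if its automorphism group acts transitively. -/
def IsTransitive (G : SimpleGraph V) : Prop :=
  ∀ u w : V, ∃ φ : G ≃g G, φ u = w

/-- A graph is quasi-transitive if its automorphism group has finitely many vertex orbits. -/
def IsQuasiTransitive (G : SimpleGraph V) : Prop :=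
  ∃ S : Finset V, ∀ u : V, ∃ φ : G ≃g G, φ u ∈ S

/-- The volume `∑_{u ∈ K} deg(u)` of a set of vertices. -/
noncomputable def vol (G : SimpleGraph V) (K : Set V) : ℝ :=
  ∑ᶠ u ∈ K, ((G.neighborSet u).ncard : ℝ)

/-- The edge boundary `∂_E K`: edges with exactly one endpoint in `K`. -/
def edgeBoundary (G : SimpleGraph V) (K : Set V) : Set (Sym2 V) :=
  {e | e ∈ G.edgeSet ∧ ∃ u w : V, e = s(u, w) ∧ u ∈ K ∧ w ∉ K}

/-- The Cheeger constant `Φ_E(G)`. -/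
noncomputable def cheeger (G : SimpleGraph V) : ℝ :=
  sInf {r : ℝ | ∃ K : Set V, K.Finite ∧ K.Nonempty ∧
    r = ((edgeBoundary G K).ncard : ℝ) / vol G K}

/-- A graph is nonamenable if its Cheeger constant is positive. -/
def Nonamenable (G : SimpleGraph V) : Prop := 0 < cheeger G

/-- The anchored Cheeger constant `Φ*_E` of (the component of `v` in) `H`, anchored at `v`. -/
noncomputable def anchoredCheeger (H : SimpleGraph V) (v : V) : ℝ :=
  ⨆ n : ℕ, sInf {r : ℝ | ∃ K : Set V, v ∈ K ∧ K.Finite ∧ n ≤ K.ncard ∧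
    (SimpleGraph.induce K H).Connected ∧
    r = ((edgeBoundary H K).ncard : ℝ) / vol H K}

/-- The cluster of `v`, viewed as a subgraph of `G`. -/
def clusterSubgraph (G : SimpleGraph V) (ω : Sym2 V → Bool) (v : V) : G.Subgraph where
  verts := cluster G ω v
  Adj u w := (openGraph G ω).Adj u w ∧ u ∈ cluster G ω v ∧ w ∈ cluster G ω v
  adj_sub h := (show G.Adj _ _ ∧ _ from h.1).1
  edge_vert h := h.2.1
  symm := ⟨fun u w h => ⟨h.1.symm, h.2.2, h.2.1⟩⟩

/-- Membership in `𝓗_v`: finite connected subgraphs of `G` containing `v`. -/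
def HSetMem (G : SimpleGraph V) (v : V) (H : G.Subgraph) : Prop :=
  v ∈ H.verts ∧ H.verts.Finite ∧ H.Connected

/-- `F : 𝓗_v → ℂ` has subexponential growth:
`limsup (1/n) log sup {|F(H)| : H ∈ 𝓗_v, |E(H)| ≤ n} ≤ 0`. -/
def SubexpGrowth (G : SimpleGraph V) (v : V) (F : G.Subgraph → ℂ) : Prop :=
  Filter.limsup (fun n : ℕ =>
    Real.log (sSup {r : ℝ | ∃ H : G.Subgraph, HSetMem G v H ∧
      (touchingEdges G H.verts).ncard ≤ n ∧ r = ‖F H‖}) / (n : ℝ))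
    Filter.atTop ≤ 0

-- The configuration `ω` with the edge `e` opened, i.e. `ω^e`.
open Classical in
noncomputable def updOpen (ω : Sym2 V → Bool) (e : Sym2 V) : Sym2 V → Bool :=
  fun e' => if e' = e then true else ω e'

/-- The fluctuation `h_p(K_v) = p|∂K_v| - (1-p)|E_o(K_v)|` of the cluster of `v`. -/
noncomputable def fluct (G : SimpleGraph V) (p : ℝ) (ω : Sym2 V → Bool) (v : V) : ℝ :=
  p * ({e | e ∈ clusterEdges G ω v ∧ ω e = false}.ncard : ℝ) -
    (1 - p) * ({e | e ∈ clusterEdges G ω v ∧ ω e = true}.ncard : ℝ)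

/-- `Piv(H,v,W)`: edges of `H` whose deletion disconnects `v` from some vertex of `W`. -/
def Piv (H : SimpleGraph V) (v : V) (W : Set V) : Set (Sym2 V) :=
  {e | e ∈ H.edgeSet ∧ ∃ w ∈ W, ¬ (H.deleteEdges {e}).Reachable v w}

/-- `Br_k(K_v, v) = max {|Piv(K_v,v,W)| : W ⊆ K_v, |W| ≤ k}`. -/
noncomputable def Br (G : SimpleGraph V) (ω : Sym2 V → Bool) (v : V) (k : ℕ) : ℕ :=
  sSup {m : ℕ | ∃ W : Finset V, ↑W ⊆ cluster G ω v ∧ W.card ≤ k ∧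
    m = (Piv (openGraph G ω) v ↑W).ncard}

/-- `𝒫_ω(S → ∞)`: the minimal number of edges whose removal disconnects `S` from infinity
in the open subgraph of `ω`. -/
noncomputable def minCut (G : SimpleGraph V) (ω : Sym2 V → Bool) (S : Set V) : ℕ∞ :=
  ⨅ C ∈ {C : Set (Sym2 V) |
    ∀ s ∈ S, {u | ((openGraph G ω).deleteEdges C).Reachable s u}.Finite}, C.encard

/-- `v` is a furcation of `ω`: closing all edges incident to `v` splits the cluster of `v`
into at least three distinct infinite connected components. -/
def IsFurcation (G : SimpleGraph V) (ω : Sym2 V → Bool) (v : V) : Prop :=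
  ∃ u1 u2 u3 : V,
    (openGraph G ω).Adj v u1 ∧ (openGraph G ω).Adj v u2 ∧ (openGraph G ω).Adj v u3 ∧
    ¬ ((openGraph G ω).deleteEdges {e | v ∈ e}).Reachable u1 u2 ∧
    ¬ ((openGraph G ω).deleteEdges {e | v ∈ e}).Reachable u1 u3 ∧
    ¬ ((openGraph G ω).deleteEdges {e | v ∈ e}).Reachable u2 u3 ∧
    {x | ((openGraph G ω).deleteEdges {e | v ∈ e}).Reachable u1 x}.Infinite ∧
    {x | ((openGraph G ω).deleteEdges {e | v ∈ e}).Reachable u2 x}.Infinite ∧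
    {x | ((openGraph G ω).deleteEdges {e | v ∈ e}).Reachable u3 x}.Infinite

-- The `n`-step transition probability of simple random walk on the graph `H`.
open Classical in
noncomputable def walkProb (H : SimpleGraph V) : ℕ → V → V → ℝ
  | 0, u, w => if u = w then 1 else 0
  | n + 1, u, w => ∑ᶠ x ∈ H.neighborSet u, walkProb H n x w / ((H.neighborSet u).ncard : ℝ)

/-- Two vertices are `2`-connected in `H` if they are joined by two edge-disjoint paths. -/
def TwoConn (H : SimpleGraph V) (u w : V) : Prop :=
  ∃ p1 p2 : H.Walk u w, p1.IsPath ∧ p2.IsPath ∧ ∀ e ∈ p1.edges, e ∉ p2.edges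

/-- An edge of `H` is a bridge if deleting it disconnects its endpoints. -/
def IsBridgeOf (H : SimpleGraph V) (e : Sym2 V) : Prop :=
  e ∈ H.edgeSet ∧ ∃ u w : V, e = s(u, w) ∧ ¬ (H.deleteEdges {e}).Reachable u w

/-- `w` represents a leaf of the tree `Tr(K_v)` of `2`-connected components of the cluster of
`v`: it lies in the cluster, its `2`-connected component differs from that of `v`, and exactly
one bridge is incident to its `2`-connected component. -/
def IsTrLeaf (G : SimpleGraph V) (ω : Sym2 V → Bool) (v w : V) : Prop :=
  w ∈ cluster G ω v ∧ ¬ TwoConn (openGraph G ω) v w ∧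
    {e : Sym2 V | IsBridgeOf (openGraph G ω) e ∧
      ∃ x ∈ e, TwoConn (openGraph G ω) x w}.encard = 1

/-- `Lf_k(K_v, v)`: the maximum number of edges in a subgraph of `Tr(K_v)` spanned by the
union of the geodesics between the `2`-connected component of `v` and exactly `k` leaves
(`0` if `Tr(K_v)` has fewer than `k` leaves).  The tree edges of such a spanned subgraph are
exactly the bridges separating `v` from one of the chosen leaf representatives. -/
noncomputable def Lf (G : SimpleGraph V) (ω : Sym2 V → Bool) (v : V) (k : ℕ) : ℕ :=
  sSup {m : ℕ | ∃ w : Fin k → V, (∀ i, IsTrLeaf G ω v (w i)) ∧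
    (∀ i j : Fin k, i ≠ j → ¬ TwoConn (openGraph G ω) (w i) (w j)) ∧
    m = (⋃ i, Piv (openGraph G ω) v {w i}).ncard}

/-- `Q_k(p,n,m)`: the supremum over all countable locally finite graphs `G` and vertices `v`
of `P_p(Lf_k(K_v,v) = m and E_v = n)`. -/
noncomputable def Qk (k : ℕ) (p : ℝ) (n m : ℕ) : ℝ :=
  sSup {r : ℝ | ∃ (W : Type) (_ : Countable W) (G : SimpleGraph W) (v : W),
    (∀ u : W, (G.neighborSet u).Finite) ∧
    ∃ μ : Measure (Sym2 W → Bool), IsBernoulli G p μ ∧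
      r = (μ {ω | Lf G ω v k = m ∧ (clusterEdges G ω v).encard = (n : ℕ∞)}).toReal}

/-- `α(p) = sup {α ∈ [0,p] : α^{-α} (1-α)^{-(1-α)} (p/(1-p))^α < e^{ζ(p)}}`. -/
noncomputable def alphaP (G : SimpleGraph V) (v : V) (p : ℝ)
    (μ : Measure (Sym2 V → Bool)) : ℝ :=
  sSup {α : ℝ | 0 ≤ α ∧ α ≤ p ∧
    α ^ (-α) * (1 - α) ^ (-(1 - α)) * (p / (1 - p)) ^ α < Real.exp (zeta G v μ)}


/-! On the event `{E_v = n, O_v = m}` that `K_v` touches `n` edges of which `m` are open, the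
fluctuation is `h_p(K_v) = pn - m`. This event is the disjoint union of the cylinders fixing the
pair (`E(K_v)`, open edges of `E(K_v)`), each of probability `p^m (1-p)^(n-m)`. The same cylinders
are disjoint under Bernoulli-`q` percolation for every `q`, so their number `N` satisfies
`N q^m (1-q)^(n-m) ≤ 1`. Taking `q = m/n` and the Chernoff bound `KL(q ‖ p) ≥ (p - q)^2 / 2`
gives `P_p(E_v = n, O_v = m) ≤ exp(-(pn - m)^2 / 2n) ≤ exp(-α^2 n / 2)` whenever
`αn ≤ |pn - m|`, and `∑_n (n + 1) n e^{tn} e^{-α^2 n / 2}` converges for `t < α^2 / 2`. -/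

section Cluster

variable {G : SimpleGraph V} {ω ω' : Sym2 V → Bool} {v : V}

lemma touchingEdges_mono {S T : Set V} (h : S ⊆ T) : touchingEdges G S ⊆ touchingEdges G T :=
  fun _ ⟨he, u, hu, hue⟩ => ⟨he, u, h hu, hue⟩

lemma clusterEdges_subset_edgeSet : clusterEdges G ω v ⊆ G.edgeSet := fun _ he => he.1

lemma cluster_subset_of_eqOn (h : EqOn ω' ω (clusterEdges G ω v)) :
    cluster G ω' v ⊆ cluster G ω v := by
  intro u hu
  replace hu := (SimpleGraph.reachable_iff_reflTransGen v u).1 hu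
  induction hu with
  | refl => exact SimpleGraph.Reachable.refl v
  | tail _ hab ih =>
    obtain ⟨hadj, hopen⟩ := hab
    have hedge : s(_, _) ∈ clusterEdges G ω v := ⟨hadj, _, ih, Sym2.mem_mk_left _ _⟩
    exact ih.trans (SimpleGraph.Adj.reachable (G := openGraph G ω) ⟨hadj, h hedge ▸ hopen⟩)

lemma clusterEdges_eq_of_eqOn (h : EqOn ω' ω (clusterEdges G ω v)) :
    clusterEdges G ω' v = clusterEdges G ω v := by
  have hsub := cluster_subset_of_eqOn h
  have hsub' := cluster_subset_of_eqOn (h.symm.mono (touchingEdges_mono hsub))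
  rw [clusterEdges, clusterEdges, hsub.antisymm hsub']

end Cluster

section Cylinder

variable {X : Type*}

def cylinder (s o : Finset X) : Set (X → Bool) :=
  {ω | ∀ e ∈ s, (ω e = true ↔ e ∈ o)}

lemma measurableSet_cylinder (s o : Finset X) : MeasurableSet (cylinder s o) := by
  have : cylinder s o = ⋂ e ∈ s, (fun ω : X → Bool => ω e) ⁻¹' {b | b = true ↔ e ∈ o} := by
    ext ω; simp [cylinder]
  rw [this]
  exact .biInter s.countable_toSet fun e _ => measurable_pi_apply e .of_discrete

lemma eq_filter_of_mem_cylinder [DecidableEq X] {s o : Finset X} {ω : X → Bool} (hos : o ⊆ s)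
    (hω : ω ∈ cylinder s o) : o = s.filter (ω · = true) := by
  ext e
  rw [Finset.mem_filter]
  exact ⟨fun he => ⟨hos he, (hω e (hos he)).2 he⟩, fun ⟨hes, he⟩ => (hω e hes).1 he⟩

end Cylinder

open ProbabilityTheory in
lemma exists_isBernoulli (G : SimpleGraph V) {p : ℝ} (hp0 : 0 ≤ p) (hp1 : p ≤ 1) :
    ∃ μ : Measure (Sym2 V → Bool), IsBernoulli G p μ := by
  classical
  let q : unitInterval := ⟨p, hp0, hp1⟩
  have hsingle (b : Bool) :
      Ber(true, false, q) {b} = ENNReal.ofReal (if b then p else 1 - p) := by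
    cases b <;> simp [ENNReal.ofReal, Real.toNNReal_of_nonneg, hp0, hp1] <;> rfl
  refine ⟨Measure.infinitePi fun _ => Ber(true, false, q), inferInstance, fun s _ f => ?_⟩
  have hcyl : {ω : Sym2 V → Bool | ∀ e ∈ s, ω e = f e} = Set.pi s fun e => {f e} := by
    ext ω; simp
  rw [hcyl, Measure.infinitePi_pi (μ := fun _ => Ber(true, false, q))
      fun _ _ => measurableSet_singleton _,
    Finset.prod_congr rfl fun e _ => hsingle (f e), ← ENNReal.ofReal_prod_of_nonneg,
    Finset.prod_ite]
  · simp
  · intro e _; split_ifs <;> linarith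

lemma measure_cylinder {G : SimpleGraph V} {p : ℝ} {μ : Measure (Sym2 V → Bool)}
    (hμ : IsBernoulli G p μ) {s o : Finset (Sym2 V)} (hos : o ⊆ s) (hs : ↑s ⊆ G.edgeSet) :
    μ (cylinder s o) = ENNReal.ofReal (p ^ o.card * (1 - p) ^ (s.card - o.card)) := by
  classical
  have hcyl : cylinder s o = {ω | ∀ e ∈ s, ω e = decide (e ∈ o)} := by
    ext ω; exact forall₂_congr fun e _ => by cases ω e <;> simp
  have hopen : s.filter (fun e => decide (e ∈ o) = true) = o := by
    ext e; simpa using fun he => hos he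
  have hclosed : s.filter (fun e => decide (e ∈ o) = false) = s \ o := by
    ext e; simp
  rw [hcyl, hμ.2 s hs, hopen, hclosed, Finset.card_sdiff_of_subset hos]

lemma encard_mul_le_one_of_pairwiseDisjoint {Ω ι : Type*} [MeasurableSpace Ω] {μ : Measure Ω}
    [IsProbabilityMeasure μ] {S : Set ι} {C : ι → Set Ω}
    (hC : ∀ i ∈ S, MeasurableSet (C i)) (hS : S.PairwiseDisjoint C) {c : ℝ≥0∞}
    (hc : ∀ i ∈ S, μ (C i) = c) : S.encard * c ≤ 1 :=
  calc S.encard * c = ∑' i : S, μ (C i) := by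
        rw [← ENNReal.tsum_set_const]; exact tsum_congr fun i => (hc i i.2).symm
    _ ≤ μ (⋃ i : S, C i) :=
        tsum_meas_le_meas_iUnion_of_disjoint μ (fun i => hC i i.2) fun i j hij =>
          hS i.2 j.2 (Subtype.coe_ne_coe.2 hij)
    _ ≤ 1 := prob_le_one

section Signatures

variable {G : SimpleGraph V} {v : V} {n m : ℕ} {ω : Sym2 V → Bool}

def clusterSignatures (G : SimpleGraph V) (v : V) (n m : ℕ) :
    Set (Finset (Sym2 V) × Finset (Sym2 V)) :=
  {σ | σ.2 ⊆ σ.1 ∧ σ.1.card = n ∧ σ.2.card = m ∧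
    ∃ ω ∈ cylinder σ.1 σ.2, clusterEdges G ω v = σ.1}

lemma clusterEdges_eq_of_mem_cylinder {σ : Finset (Sym2 V) × Finset (Sym2 V)}
    (hσ : σ ∈ clusterSignatures G v n m) (hω : ω ∈ cylinder σ.1 σ.2) :
    clusterEdges G ω v = σ.1 := by
  obtain ⟨-, -, -, ω₀, hω₀, hE⟩ := hσ
  rw [← hE]
  refine clusterEdges_eq_of_eqOn fun e he => ?_
  rw [hE, Finset.mem_coe] at he
  exact Bool.eq_iff_iff.2 ((hω e he).trans (hω₀ e he).symm)

lemma pairwiseDisjoint_cylinder_clusterSignatures :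
    (clusterSignatures G v n m).PairwiseDisjoint fun σ => cylinder σ.1 σ.2 := by
  classical
  intro σ hσ τ hτ hne
  refine Set.disjoint_left.2 fun ω hωσ hωτ => hne ?_
  have hs : σ.1 = τ.1 := Finset.coe_injective <|
    (clusterEdges_eq_of_mem_cylinder hσ hωσ).symm.trans (clusterEdges_eq_of_mem_cylinder hτ hωτ)
  refine Prod.ext hs ?_
  rw [eq_filter_of_mem_cylinder hσ.1 hωσ, eq_filter_of_mem_cylinder hτ.1 hωτ, hs]

lemma measure_cylinder_of_mem_clusterSignatures {p : ℝ} {μ : Measure (Sym2 V → Bool)}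
    (hμ : IsBernoulli G p μ) {σ : Finset (Sym2 V) × Finset (Sym2 V)}
    (hσ : σ ∈ clusterSignatures G v n m) :
    μ (cylinder σ.1 σ.2) = ENNReal.ofReal (p ^ m * (1 - p) ^ (n - m)) := by
  obtain ⟨hos, hn, hm, ω₀, -, hE⟩ := hσ
  rw [measure_cylinder hμ hos (hE ▸ clusterEdges_subset_edgeSet), hn, hm]

lemma encard_clusterSignatures_mul_le_one {q : ℝ} (hq0 : 0 ≤ q) (hq1 : q ≤ 1) :
    (clusterSignatures G v n m).encard * ENNReal.ofReal (q ^ m * (1 - q) ^ (n - m)) ≤ 1 := by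
  obtain ⟨μ, hμ⟩ := exists_isBernoulli G hq0 hq1
  have := hμ.1
  exact encard_mul_le_one_of_pairwiseDisjoint (μ := μ)
    (fun σ _ => measurableSet_cylinder σ.1 σ.2) pairwiseDisjoint_cylinder_clusterSignatures
    fun _ => measure_cylinder_of_mem_clusterSignatures hμ

lemma clusterSignatures_finite : (clusterSignatures G v n m).Finite := by
  refine Set.encard_ne_top_iff.1 fun htop => ?_
  have h := encard_clusterSignatures_mul_le_one (G := G) (v := v) (n := n) (m := m)
    (q := 1 / 2) (by norm_num) (by norm_num)
  rw [htop, ENat.toENNReal_top, ENNReal.top_mul (ENNReal.ofReal_pos.2 (by positivity)).ne'] at h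
  exact absurd h (by simp)

end Signatures

lemma pow_le_pow_mul_exp {x y N : ℝ} (hx : 0 ≤ x) (hy : 0 ≤ y) {k : ℕ}
    (hk : (k : ℝ) = N * y ^ 2) : x ^ k ≤ y ^ k * Real.exp (N * (x * y - y ^ 2)) := by
  rcases hy.eq_or_lt with rfl | hy
  · obtain rfl : k = 0 := by exact_mod_cast hk.trans (by ring : N * (0 : ℝ) ^ 2 = 0)
    simp
  calc x ^ k = y ^ k * (x / y) ^ k := by
        rw [div_pow, mul_div_cancel₀ _ (pow_ne_zero _ hy.ne')]
    _ ≤ y ^ k * Real.exp (x / y - 1) ^ k := by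
        gcongr; linarith [Real.add_one_le_exp (x / y - 1)]
    _ = y ^ k * Real.exp (N * (x * y - y ^ 2)) := by
        rw [← Real.exp_nat_mul, hk]; congr 2; field_simp

lemma sqrt_mul_sqrt_add_sqrt_mul_sqrt_le {p q : ℝ} (hp0 : 0 ≤ p) (hp1 : p ≤ 1) (hq0 : 0 ≤ q)
    (hq1 : q ≤ 1) :
    √p * √q + √(1 - p) * √(1 - q) ≤ 1 - (p - q) ^ 2 / 4 := by
  obtain ⟨a, ha, rfl⟩ : ∃ a, 0 ≤ a ∧ a ^ 2 = p := ⟨_, Real.sqrt_nonneg _, Real.sq_sqrt hp0⟩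
  obtain ⟨b, hb, rfl⟩ : ∃ b, 0 ≤ b ∧ b ^ 2 = q := ⟨_, Real.sqrt_nonneg _, Real.sq_sqrt hq0⟩
  obtain ⟨c, hc, hc2⟩ : ∃ c, 0 ≤ c ∧ c ^ 2 = 1 - a ^ 2 :=
    ⟨_, Real.sqrt_nonneg _, Real.sq_sqrt (by linarith)⟩
  obtain ⟨d, hd, hd2⟩ : ∃ d, 0 ≤ d ∧ d ^ 2 = 1 - b ^ 2 :=
    ⟨_, Real.sqrt_nonneg _, Real.sq_sqrt (by linarith)⟩
  rw [Real.sqrt_sq ha, Real.sqrt_sq hb, ← hc2, ← hd2, Real.sqrt_sq hc, Real.sqrt_sq hd]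
  have hab : (a ^ 2 - b ^ 2) ^ 2 ≤ 4 * (a - b) ^ 2 := by
    have : (a + b) ^ 2 ≤ 4 := by nlinarith
    nlinarith [sq_nonneg (a - b)]
  have hcd : (c ^ 2 - d ^ 2) ^ 2 ≤ 4 * (c - d) ^ 2 := by
    have : (c + d) ^ 2 ≤ 4 := by nlinarith
    nlinarith [sq_nonneg (c - d)]
  have : c ^ 2 - d ^ 2 = -(a ^ 2 - b ^ 2) := by linarith
  nlinarith

-- Chernoff's bound `KL(m/n ‖ p) ≥ (p - m/n)^2 / 2`, obtained by comparing `√p^m √(1-p)^(n-m)`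
-- with `√q^m √(1-q)^(n-m)` through the Bhattacharyya coefficient `√(pq) + √((1-p)(1-q))`.
lemma pow_mul_one_sub_pow_le {p : ℝ} (hp0 : 0 ≤ p) (hp1 : p ≤ 1) {n m : ℕ} (hmn : m ≤ n) :
    p ^ m * (1 - p) ^ (n - m) ≤
      Real.exp (-((p * n - m) ^ 2 / (2 * n))) *
        ((m / n : ℝ) ^ m * (1 - m / n : ℝ) ^ (n - m)) := by
  set q : ℝ := m / n
  have hm : (m : ℝ) = n * q := by
    rcases Nat.eq_zero_or_pos n with rfl | hn
    · simp [Nat.le_zero.1 hmn]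
    · exact (mul_div_cancel₀ _ (by positivity)).symm
  have hq0 : 0 ≤ q := by positivity
  have hq1 : q ≤ 1 := div_le_one_of_le₀ (by exact_mod_cast hmn) (Nat.cast_nonneg n)
  have hopen := pow_le_pow_mul_exp (Real.sqrt_nonneg p) (Real.sqrt_nonneg q) (k := m)
    (N := n) (by rw [Real.sq_sqrt hq0, hm])
  have hclosed := pow_le_pow_mul_exp (Real.sqrt_nonneg (1 - p)) (Real.sqrt_nonneg (1 - q))
    (k := n - m) (N := n) (by rw [Real.sq_sqrt (by linarith), Nat.cast_sub hmn, hm]; ring)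
  have hsqrt := calc
    √p ^ m * √(1 - p) ^ (n - m)
      ≤ (√q ^ m * Real.exp (n * (√p * √q - √q ^ 2))) *
          (√(1 - q) ^ (n - m) * Real.exp (n * (√(1 - p) * √(1 - q) - √(1 - q) ^ 2))) :=
        mul_le_mul hopen hclosed (by positivity) (by positivity)
    _ = √q ^ m * √(1 - q) ^ (n - m) *
          Real.exp (n * (√p * √q + √(1 - p) * √(1 - q) - 1)) := by
        rw [mul_mul_mul_comm, ← Real.exp_add, Real.sq_sqrt hq0, Real.sq_sqrt (by linarith)]
        ring_nf
    _ ≤ √q ^ m * √(1 - q) ^ (n - m) * Real.exp (n * (-((p - q) ^ 2 / 4))) := by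
        gcongr
        linarith [sqrt_mul_sqrt_add_sqrt_mul_sqrt_le hp0 hp1 hq0 hq1]
  have hexp : -((p * n - m) ^ 2 / (2 * n)) = 2 * (n * (-((p - q) ^ 2 / 4))) := by
    rcases eq_or_ne (n : ℝ) 0 with hn | hn
    · simp [hn, hm]
    · rw [hm]; field_simp; ring
  have hsq := pow_le_pow_left₀ (by positivity) hsqrt 2
  simp only [mul_pow, ← pow_mul, pow_mul', Real.sq_sqrt hp0, Real.sq_sqrt hq0,
    Real.sq_sqrt (sub_nonneg.2 hp1), Real.sq_sqrt (sub_nonneg.2 hq1), ← Real.exp_nat_mul] at hsq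
  rw [hexp, mul_comm (Real.exp _)]
  exact_mod_cast hsq

section ClusterCount

variable {G : SimpleGraph V} {v : V} {n m : ℕ} {p : ℝ} {μ : Measure (Sym2 V → Bool)}

def clusterCount (G : SimpleGraph V) (v : V) (n m : ℕ) : Set (Sym2 V → Bool) :=
  {ω | (clusterEdges G ω v).Finite ∧ (clusterEdges G ω v).ncard = n ∧
    {e | e ∈ clusterEdges G ω v ∧ ω e = true}.ncard = m}

lemma clusterCount_subset_biUnion_cylinder :
    clusterCount G v n m ⊆ ⋃ σ ∈ clusterSignatures G v n m, cylinder σ.1 σ.2 := by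
  classical
  rintro ω ⟨hfin, hn, hm⟩
  have hω : ω ∈ cylinder hfin.toFinset (hfin.toFinset.filter (ω · = true)) := fun e he => by
    simp [he]
  refine Set.mem_biUnion (x := (hfin.toFinset, hfin.toFinset.filter (ω · = true)))
    ⟨Finset.filter_subset _ _, ?_, ?_, ω, hω, hfin.coe_toFinset.symm⟩ hω
  · rw [← hn, Set.ncard_eq_toFinset_card _ hfin]
  · rw [← hm, ← Set.ncard_coe_finset, Finset.coe_filter]
    simp only [Set.Finite.mem_toFinset]

lemma fluct_eq_of_mem_clusterCount {ω : Sym2 V → Bool} (hω : ω ∈ clusterCount G v n m)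
    (p : ℝ) :
    fluct G p ω v = p * n - m := by
  obtain ⟨hfin, hn, hm⟩ := hω
  have hclosed : {e | e ∈ clusterEdges G ω v ∧ ω e = false} =
      clusterEdges G ω v \ {e | e ∈ clusterEdges G ω v ∧ ω e = true} := by
    ext e; simp
  have hsplit := Set.ncard_sdiff_add_ncard_of_subset
    (s := {e | e ∈ clusterEdges G ω v ∧ ω e = true}) (fun _ he => he.1) hfin
  have hcast : ({e | e ∈ clusterEdges G ω v ∧ ω e = false}.ncard : ℝ) = n - m := by
    rw [hclosed, ← hn, ← hm, ← hsplit]; push_cast; ring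
  rw [fluct, hcast, hm]
  ring

lemma measure_clusterCount_le (hμ : IsBernoulli G p μ) :
    μ (clusterCount G v n m) ≤
      (clusterSignatures G v n m).encard * ENNReal.ofReal (p ^ m * (1 - p) ^ (n - m)) :=
  calc μ (clusterCount G v n m)
      ≤ μ (⋃ σ ∈ clusterSignatures G v n m, cylinder σ.1 σ.2) :=
        measure_mono clusterCount_subset_biUnion_cylinder
    _ ≤ ∑' σ : clusterSignatures G v n m, μ (cylinder σ.1.1 σ.1.2) :=
        measure_biUnion_le μ clusterSignatures_finite.countable _
    _ = _ := by
        rw [← ENNReal.tsum_set_const]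
        exact tsum_congr fun σ => measure_cylinder_of_mem_clusterSignatures hμ σ.2

lemma measure_clusterCount_le_exp (hμ : IsBernoulli G p μ) (hp0 : 0 ≤ p) (hp1 : p ≤ 1)
    (hmn : m ≤ n) :
    μ (clusterCount G v n m) ≤ ENNReal.ofReal (Real.exp (-((p * n - m) ^ 2 / (2 * n)))) := by
  have hq0 : (0 : ℝ) ≤ m / n := by positivity
  have hq1 : (m / n : ℝ) ≤ 1 := div_le_one_of_le₀ (by exact_mod_cast hmn) (Nat.cast_nonneg n)
  calc μ (clusterCount G v n m)
      ≤ (clusterSignatures G v n m).encard * ENNReal.ofReal (p ^ m * (1 - p) ^ (n - m)) :=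
        measure_clusterCount_le hμ
    _ ≤ (clusterSignatures G v n m).encard *
          (ENNReal.ofReal ((m / n : ℝ) ^ m * (1 - m / n : ℝ) ^ (n - m)) *
            ENNReal.ofReal (Real.exp (-((p * n - m) ^ 2 / (2 * n))))) := by
        rw [← ENNReal.ofReal_mul (by positivity), mul_comm ((m / n : ℝ) ^ m * _)]
        gcongr _ * ENNReal.ofReal ?_
        exact pow_mul_one_sub_pow_le hp0 hp1 hmn
    _ ≤ 1 * ENNReal.ofReal (Real.exp (-((p * n - m) ^ 2 / (2 * n)))) := by
        rw [← mul_assoc]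
        gcongr
        exact encard_clusterSignatures_mul_le_one hq0 hq1
    _ = _ := one_mul _

lemma exists_mem_clusterCount {ω : Sym2 V → Bool} (hfin : (clusterEdges G ω v).Finite) :
    ∃ n m, m ≤ n ∧ ω ∈ clusterCount G v n m :=
  ⟨_, _, Set.ncard_le_ncard (fun _ he => he.1) hfin, hfin, rfl, rfl⟩

lemma setLIntegral_clusterCount_inter_le (hμ : IsBernoulli G p μ) (hp0 : 0 ≤ p) (hp1 : p ≤ 1)
    {α : ℝ} (hα : 0 ≤ α) (hmn : m ≤ n) (t : ℝ) :
    ∫⁻ ω in clusterCount G v n m ∩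
        {ω | α * ((clusterEdges G ω v).ncard : ℝ) ≤ |fluct G p ω v|},
      ENNReal.ofReal (|fluct G p ω v| * Real.exp (t * ((clusterEdges G ω v).ncard : ℝ))) ∂μ
      ≤ ENNReal.ofReal (n * Real.exp ((t - α ^ 2 / 2) * n)) := by
  by_cases hlarge : α * n ≤ |p * n - m|
  swap
  · have hempty : clusterCount G v n m ∩
        {ω | α * ((clusterEdges G ω v).ncard : ℝ) ≤ |fluct G p ω v|} = ∅ := by
      refine Set.eq_empty_of_forall_notMem fun ω ⟨hω, hfluct⟩ => hlarge ?_
      rwa [Set.mem_ofPred_eq, fluct_eq_of_mem_clusterCount hω, hω.2.1] at hfluct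
    simp [hempty]
  have hfluct_le : |p * n - m| ≤ n := by
    have : (m : ℝ) ≤ n := by exact_mod_cast hmn
    rw [abs_le]; constructor <;> nlinarith
  have hexponent : α ^ 2 / 2 * n ≤ (p * n - m) ^ 2 / (2 * n) := by
    rcases Nat.eq_zero_or_pos n with rfl | hn
    · simp
    rw [le_div_iff₀ (by positivity), ← sq_abs (p * n - m)]
    nlinarith [mul_le_mul hlarge hlarge (by positivity) (abs_nonneg _)]
  calc _ ≤ ∫⁻ _ in clusterCount G v n m, ENNReal.ofReal (n * Real.exp (t * n)) ∂μ := by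
        refine (lintegral_mono_set Set.inter_subset_left).trans
          (setLIntegral_mono measurable_const fun ω hω => ?_)
        rw [fluct_eq_of_mem_clusterCount hω, hω.2.1]
        gcongr
    _ = ENNReal.ofReal (n * Real.exp (t * n)) * μ (clusterCount G v n m) :=
        setLIntegral_const _ _
    _ ≤ ENNReal.ofReal (n * Real.exp (t * n)) *
          ENNReal.ofReal (Real.exp (-((p * n - m) ^ 2 / (2 * n)))) := by
        gcongr; exact measure_clusterCount_le_exp hμ hp0 hp1 hmn
    _ ≤ ENNReal.ofReal (n * Real.exp (t * n)) *
          ENNReal.ofReal (Real.exp (-(α ^ 2 / 2 * n))) := by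
        gcongr
    _ = ENNReal.ofReal (n * Real.exp ((t - α ^ 2 / 2) * n)) := by
        rw [← ENNReal.ofReal_mul (by positivity), mul_assoc, ← Real.exp_add]
        ring_nf

end ClusterCount

lemma tsum_fin_succ_ofReal_mul_exp_lt_top {r : ℝ} (hr : r < 0) :
    ∑' (n : ℕ) (_ : Fin (n + 1)), ENNReal.ofReal (n * Real.exp (r * n)) < ⊤ := by
  have hsum : Summable fun n : ℕ => (n + 1) * (n * Real.exp (r * n)) :=
    ((Real.summable_pow_mul_exp_neg_nat_mul 2 (neg_pos.2 hr)).add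
      (Real.summable_pow_mul_exp_neg_nat_mul 1 (neg_pos.2 hr))).congr fun n => by ring_nf
  convert ENNReal.ofReal_lt_top (r := ∑' n : ℕ, (n + 1) * (n * Real.exp (r * n))) using 1
  rw [ENNReal.ofReal_tsum_of_nonneg (fun n => by positivity) hsum]
  refine tsum_congr fun n => ?_
  rw [ENNReal.tsum_const, ENat.card_eq_coe_fintype_card, Fintype.card_fin,
    ENNReal.ofReal_mul (by positivity : (0 : ℝ) ≤ n + 1)]
  exact congrArg (· * _) (by exact_mod_cast (ENNReal.ofReal_natCast (n + 1)).symm)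

theorem fluctuation_exponential_moment_general
    (α : ℝ) (hα : 0 < α)
    {V : Type*} (G : SimpleGraph V)
    (v : V)
    (p : ℝ) (hp0 : 0 ≤ p) (hp1 : p ≤ 1)
    (t : ℝ) (ht1 : t < α ^ 2 / 2)
    (μ : Measure (Sym2 V → Bool)) (hμ : IsBernoulli G p μ) :
    ∫⁻ ω in {ω | (clusterEdges G ω v).Finite ∧
        α * ((clusterEdges G ω v).ncard : ℝ) ≤ |fluct G p ω v|},
      ENNReal.ofReal (|fluct G p ω v| *
        Real.exp (t * ((clusterEdges G ω v).ncard : ℝ))) ∂μ < ⊤ := by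
  set F : Set (Sym2 V → Bool) := {ω | α * ((clusterEdges G ω v).ncard : ℝ) ≤ |fluct G p ω v|}
  have hcover : {ω | (clusterEdges G ω v).Finite ∧
      α * ((clusterEdges G ω v).ncard : ℝ) ≤ |fluct G p ω v|} ⊆
      ⋃ (n : ℕ) (m : Fin (n + 1)), clusterCount G v n m ∩ F := fun ω ⟨hfin, hω⟩ => by
    obtain ⟨n, m, hmn, hcount⟩ := exists_mem_clusterCount hfin
    exact Set.mem_iUnion₂.2 ⟨n, ⟨m, Nat.lt_succ_of_le hmn⟩, hcount, hω⟩
  calc _ ≤ ∑' (n : ℕ) (m : Fin (n + 1)), ∫⁻ ω in clusterCount G v n m ∩ F,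
        ENNReal.ofReal (|fluct G p ω v| * Real.exp (t * ((clusterEdges G ω v).ncard : ℝ))) ∂μ :=
        (lintegral_mono_set hcover).trans <| (lintegral_iUnion_le _ _).trans <|
          ENNReal.tsum_le_tsum fun n => lintegral_iUnion_le _ _
    _ ≤ ∑' (n : ℕ) (_ : Fin (n + 1)), ENNReal.ofReal (n * Real.exp ((t - α ^ 2 / 2) * n)) :=
        ENNReal.tsum_le_tsum fun n => ENNReal.tsum_le_tsum fun m =>
          setLIntegral_clusterCount_inter_le hμ hp0 hp1 hα.le (Nat.lt_succ_iff.1 m.2) t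
    _ < ⊤ := tsum_fin_succ_ofReal_mul_exp_lt_top (by linarith)

/-- **Proposition 2.2.**  Let `α > 0`.  Then
`E_p[|h_p(K_v)| e^{t E_v} 1(α E_v ≤ |h_p(K_v)| < ∞)] < ∞` for every locally finite graph
`G`, every `v ∈ V`, every `p ∈ [0,1]` and every `0 ≤ t < α²/2`. -/
theorem fluctuation_exponential_moment
    (α : ℝ) (hα : 0 < α)
    {V : Type*} (G : SimpleGraph V)
    (hlf : ∀ u : V, (G.neighborSet u).Finite) (v : V)
    (p : ℝ) (hp0 : 0 ≤ p) (hp1 : p ≤ 1)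
    (t : ℝ) (ht0 : 0 ≤ t) (ht1 : t < α ^ 2 / 2)
    (μ : Measure (Sym2 V → Bool)) (hμ : IsBernoulli G p μ) :
    ∫⁻ ω in {ω | (clusterEdges G ω v).Finite ∧
        α * ((clusterEdges G ω v).ncard : ℝ) ≤ |fluct G p ω v|},
      ENNReal.ofReal (|fluct G p ω v| *
        Real.exp (t * ((clusterEdges G ω v).ncard : ℝ))) ∂μ < ⊤ :=
  fluctuation_exponential_moment_general α hα G v p hp0 hp1 t ht1 μ hμ

end Percolation
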